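/- For m ≥ 3 and d > 0, p(⌊m(m+3)/8 + d·m^{3/2}/4⌋) > 2^m·2(1 − 1/d²)/(d·m^{3/2}). -/

import Mathlib

/-!
Coin-flipping model. A subset `S ⊆ {0, …, m-1}` (the positions of the heads among `m` fair coin
flips) determines a partition whose parts are, for each head, one plus the number of tails before
it. This map is injective, and the size `w(S)` of the partition has mean `μ = m(m+3)/8` and
variance `σ² = (2m³ + 3m² + 19m)/96` over the `2^m` subsets. By Chebyshev's inequality more than
`2^m (1 - 1/d²)` subsets satisfy `|w(S) - μ| < t` with `t = d m^{3/2}/4 - 1/2`; they are spread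
over at most `2t + 1 = d m^{3/2}/2` sizes, none larger than `N = ⌊μ + d m^{3/2}/4⌋`, and each size
`n` is hit at most `p(n) ≤ p(N)` times. For `m ≤ 4` Chebyshev is too weak, but then `p(N) ≥ 2`
already suffices.
-/

def p (n : ℕ) : ℕ := Fintype.card (Nat.Partition n)

open Finset

lemma p_pos (n : ℕ) : 0 < p n := Fintype.card_pos

lemma p_mono : Monotone p := by
  refine monotone_nat_of_le_succ fun n => Fintype.card_le_of_injective
    (fun π => ⟨1 ::ₘ π.parts, ?_, by simp [π.parts_sum, add_comm]⟩) fun π σ h => ?_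
  · intro i hi
    rcases Multiset.mem_cons.1 hi with rfl | hi
    exacts [one_pos, π.parts_pos hi]
  · exact Nat.Partition.ext (Multiset.cons_inj_right 1 |>.1 (congrArg Nat.Partition.parts h))

lemma one_lt_p {n : ℕ} (hn : 2 ≤ n) : 1 < p n := by
  refine Fintype.one_lt_card_iff.2 ⟨Nat.Partition.indiscrete n,
    ⟨{1, n - 1}, by simp; omega, by simp; omega⟩, fun h => ?_⟩
  have := congrArg Nat.Partition.parts h
  simp [Nat.Partition.indiscrete_parts (by omega : n ≠ 0)] at this

lemma StrictMono.apply_add_le_apply_add {k : ℕ} {f : Fin k → ℕ} (hf : StrictMono f)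
    {i j : Fin k} (hij : i ≤ j) : f i + j ≤ f j + i := by
  have := card_le_card_of_injOn f (s := Icc i j) (t := Icc (f i) (f j))
    (fun l hl => by
      simp only [coe_Icc, Set.mem_Icc] at hl ⊢
      exact ⟨hf.monotone hl.1, hf.monotone hl.2⟩)
    hf.injective.injOn
  simp only [Fin.card_Icc, Nat.card_Icc] at this
  omega

lemma card_filter_le_abs_sub_mul_sq_le {ι : Type*} (s : Finset ι) (f : ι → ℝ) (c : ℝ) {t : ℝ}
    (ht : 0 ≤ t) : #{i ∈ s | t ≤ |f i - c|} * t ^ 2 ≤ ∑ i ∈ s, (f i - c) ^ 2 :=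
  calc #{i ∈ s | t ≤ |f i - c|} * t ^ 2 = ∑ i ∈ s with t ≤ |f i - c|, t ^ 2 := by
        rw [sum_const, nsmul_eq_mul]
    _ ≤ ∑ i ∈ s with t ≤ |f i - c|, (f i - c) ^ 2 := sum_le_sum fun i hi => by
        rw [← sq_abs (f i - c)]
        exact pow_le_pow_left₀ ht (mem_filter.1 hi).2 2
    _ ≤ ∑ i ∈ s, (f i - c) ^ 2 :=
        sum_le_sum_of_subset_of_nonneg (filter_subset _ _) fun _ _ _ => sq_nonneg _

lemma card_Icc_ceil_sub_floor_add_le (x : ℝ) {t : ℝ} (ht : 0 ≤ t) :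
    (#(Icc ⌈x - t⌉₊ ⌊x + t⌋₊) : ℝ) ≤ 2 * t + 1 := by
  rw [Nat.card_Icc]
  rcases lt_or_ge (x + t) 0 with hneg | hnonneg
  · rw [Nat.floor_eq_zero.2 (by linarith)]
    have : ((0 + 1 - ⌈x - t⌉₊ : ℕ) : ℝ) ≤ 1 := by exact_mod_cast Nat.sub_le _ _
    linarith
  · have hfloor := Nat.floor_le hnonneg
    have hceil := Nat.le_ceil (x - t)
    rcases le_total ⌈x - t⌉₊ (⌊x + t⌋₊ + 1) with h | h
    · rw [Nat.cast_sub h]; push_cast; linarith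
    · rw [Nat.sub_eq_zero_of_le h]; push_cast; linarith

lemma rpow_three_halves {x : ℝ} (hx : 0 ≤ x) : x ^ (3 / 2 : ℝ) = x * √x := by
  rw [show (3 / 2 : ℝ) = 1 + 1 / 2 by norm_num, Real.rpow_add' hx (by norm_num), Real.rpow_one,
    Real.sqrt_eq_rpow]

lemma Finset.le_orderEmbOfFin (S : Finset ℕ) (i : Fin #S) : (i : ℕ) ≤ S.orderEmbOfFin rfl i := by
  have := (S.orderEmbOfFin rfl).strictMono.apply_add_le_apply_add
    (show (⟨0, i.pos⟩ : Fin #S) ≤ i from Nat.zero_le _)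
  simp only at this
  omega

namespace CoinFlip

/-- If `a` is the `i`-th smallest element of `S` (counting from `0`), then `a + 1 - i` is one
more than the number of non-elements below `a`; these parts are weakly increasing in `i`. -/
def parts (S : Finset ℕ) : List ℕ := List.ofFn fun i : Fin #S => S.orderEmbOfFin rfl i + 1 - i

def weight (S : Finset ℕ) : ℕ := (parts S).sum

@[simp] lemma weight_empty : weight ∅ = 0 := rfl

lemma pos_of_mem_parts {S : Finset ℕ} {a : ℕ} (ha : a ∈ parts S) : 0 < a := by
  obtain ⟨i, rfl⟩ := List.mem_ofFn.1 ha
  have := le_orderEmbOfFin S i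
  omega

lemma parts_pairwise_le (S : Finset ℕ) : (parts S).Pairwise (· ≤ ·) := by
  refine List.pairwise_ofFn.2 fun i j hij => ?_
  have := (S.orderEmbOfFin rfl).strictMono.apply_add_le_apply_add hij.le
  have := le_orderEmbOfFin S i
  omega

lemma parts_injective : Function.Injective fun S : Finset ℕ => (parts S : Multiset ℕ) := by
  intro S T h
  have hST : parts S = parts T := List.Perm.eq_of_pairwise' (parts_pairwise_le S)
    (parts_pairwise_le T) (Multiset.coe_eq_coe.1 h)
  have hcard : #S = #T := by simpa [parts] using congrArg List.length hST
  rw [← sort_toFinset S (· ≤ ·), ← sort_toFinset T (· ≤ ·)]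
  refine congrArg _ (List.ext_getElem (by simp [hcard]) fun i hS hT => ?_)
  have hi := List.getElem_of_eq hST (by simpa [parts] using hS)
  have := le_orderEmbOfFin S ⟨i, by simpa using hS⟩
  have := le_orderEmbOfFin T ⟨i, by simpa using hT⟩
  simp only [parts, List.getElem_ofFn, orderEmbOfFin_apply, Fin.getElem_fin] at hi this
  omega

lemma card_filter_weight_eq_le (s : Finset (Finset ℕ)) (n : ℕ) : #{S ∈ s | weight S = n} ≤ p n :=
  calc #{S ∈ s | weight S = n}
      ≤ #((univ : Finset (Nat.Partition n)).image Nat.Partition.parts) :=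
        card_le_card_of_injOn (fun S => (parts S : Multiset ℕ))
          (fun S hS => mem_image.2 ⟨⟨parts S, pos_of_mem_parts, by
            simpa [weight] using (mem_filter.1 hS).2⟩, mem_univ _, rfl⟩)
          parts_injective.injOn
    _ ≤ p n := card_image_le

lemma weight_add_sum_range (S : Finset ℕ) :
    weight S + ∑ i ∈ range #S, i = ∑ a ∈ S, (a + 1) := by
  rw [weight, parts, List.sum_ofFn, ← Fin.sum_univ_eq_sum_range, ← sum_add_distrib]
  conv_rhs => rw [← map_orderEmbOfFin_univ S rfl, sum_map]
  refine sum_congr rfl fun i _ => ?_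
  have := le_orderEmbOfFin S i
  simp only [RelEmbedding.coe_toEmbedding]
  omega

lemma weight_insert {m : ℕ} {S : Finset ℕ} (hS : S ⊆ range m) :
    weight (insert m S) + #S = weight S + m + 1 := by
  have hm : m ∉ S := fun h => by simpa using hS h
  have h1 := weight_add_sum_range (insert m S)
  have h2 := weight_add_sum_range S
  rw [card_insert_of_notMem hm, sum_range_succ, sum_insert hm] at h1
  omega

lemma sum_powerset_range_succ (m : ℕ) (F : ℝ → ℝ → ℝ) :
    ∑ S ∈ (range (m + 1)).powerset, F (weight S) #S =
      ∑ S ∈ (range m).powerset, (F (weight S) #S + F (weight S + m + 1 - #S) (#S + 1)) := by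
  rw [range_add_one, sum_powerset_insert notMem_range_self, ← sum_add_distrib]
  refine sum_congr rfl fun S hS => ?_
  have hS := mem_powerset.1 hS
  have hw : (weight (insert m S) : ℝ) + #S = weight S + m + 1 := by
    exact_mod_cast weight_insert hS
  rw [card_insert_of_notMem fun h => by simpa using hS h, ← hw]
  push_cast
  ring_nf

section Moments

variable (m : ℕ)

lemma sum_card_powerset_range : ∑ S ∈ (range m).powerset, (#S : ℝ) = m * 2 ^ m / 2 := by
  induction m with
  | zero => simp
  | succ m ih =>
    rw [sum_powerset_range_succ m fun _ k => k]
    simp only [sum_add_distrib, sum_const, card_powerset, card_range, ih]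
    push_cast
    ring

lemma sum_card_sq_powerset_range :
    ∑ S ∈ (range m).powerset, (#S : ℝ) ^ 2 = (m ^ 2 + m) * 2 ^ m / 4 := by
  induction m with
  | zero => simp
  | succ m ih =>
    rw [sum_powerset_range_succ m fun _ k => k ^ 2]
    simp only [add_sq, sum_add_distrib, ← sum_mul, ← mul_sum, sum_const, card_powerset,
      card_range, ih, sum_card_powerset_range]
    push_cast
    ring

lemma sum_weight_powerset_range :
    ∑ S ∈ (range m).powerset, (weight S : ℝ) = (m ^ 2 + 3 * m) * 2 ^ m / 8 := by
  induction m with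
  | zero => simp
  | succ m ih =>
    rw [sum_powerset_range_succ m fun w _ => w]
    simp only [sum_add_distrib, sum_sub_distrib, sum_const, card_powerset, card_range, ih,
      sum_card_powerset_range]
    push_cast
    ring

lemma sum_weight_mul_card_powerset_range :
    ∑ S ∈ (range m).powerset, (weight S : ℝ) * #S =
      (m ^ 3 + 3 * m ^ 2 + 4 * m) * 2 ^ m / 16 := by
  induction m with
  | zero => simp
  | succ m ih =>
    rw [sum_powerset_range_succ m fun w k => w * k]
    simp only [add_mul, sub_mul, mul_add, mul_one, ← sq]
    simp only [sum_add_distrib, sum_sub_distrib, ← mul_sum, sum_const, card_powerset, card_range,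
      ih, sum_card_powerset_range, sum_card_sq_powerset_range, sum_weight_powerset_range]
    push_cast
    ring

lemma sum_weight_sq_powerset_range :
    ∑ S ∈ (range m).powerset, (weight S : ℝ) ^ 2 =
      (3 * m ^ 4 + 22 * m ^ 3 + 33 * m ^ 2 + 38 * m) * 2 ^ m / 192 := by
  induction m with
  | zero => simp
  | succ m ih =>
    rw [sum_powerset_range_succ m fun w _ => w ^ 2]
    simp only [add_sq, sub_sq, add_mul, mul_add, mul_one, mul_assoc]
    simp only [sum_add_distrib, sum_sub_distrib, ← sum_mul, ← mul_sum, sum_const, card_powerset,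
      card_range, ih, sum_card_powerset_range, sum_card_sq_powerset_range,
      sum_weight_powerset_range, sum_weight_mul_card_powerset_range]
    push_cast
    ring

end Moments

noncomputable def mean (m : ℕ) : ℝ := m * (m + 3) / 8

noncomputable def variance (m : ℕ) : ℝ := (2 * m ^ 3 + 3 * m ^ 2 + 19 * m) / 96

lemma sum_sq_weight_sub_mean (m : ℕ) :
    ∑ S ∈ (range m).powerset, ((weight S : ℝ) - mean m) ^ 2 = 2 ^ m * variance m := by
  simp only [mean, variance, sub_sq, sum_add_distrib, sum_sub_distrib, ← sum_mul, ← mul_sum,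
    sum_const, card_powerset, card_range, sum_weight_sq_powerset_range, sum_weight_powerset_range]
  ring

lemma card_filter_abs_weight_sub_lt_le (s : Finset (Finset ℕ)) (c : ℝ) {t : ℝ} (ht : 0 ≤ t) :
    (#{S ∈ s | |(weight S : ℝ) - c| < t} : ℝ) ≤ (2 * t + 1) * p ⌊c + t⌋₊ := by
  have hmaps : ∀ S ∈ {S ∈ s | |(weight S : ℝ) - c| < t},
      weight S ∈ Icc ⌈c - t⌉₊ ⌊c + t⌋₊ := by
    intro S hS
    have := abs_lt.1 (mem_filter.1 hS).2
    exact mem_Icc.2 ⟨Nat.ceil_le.2 (by linarith), Nat.le_floor (by linarith)⟩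
  have hcard := card_le_mul_card_image_of_maps_to hmaps _ fun n hn =>
    (card_filter_weight_eq_le _ n).trans (p_mono (mem_Icc.1 hn).2)
  calc (#{S ∈ s | |(weight S : ℝ) - c| < t} : ℝ)
      ≤ p ⌊c + t⌋₊ * #(Icc ⌈c - t⌉₊ ⌊c + t⌋₊) := by exact_mod_cast hcard
    _ ≤ p ⌊c + t⌋₊ * (2 * t + 1) := by gcongr; exact card_Icc_ceil_sub_floor_add_le c ht
    _ = (2 * t + 1) * p ⌊c + t⌋₊ := mul_comm _ _

theorem two_pow_mul_one_sub_variance_div_le (m : ℕ) {t : ℝ} (ht : 0 < t) :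
    2 ^ m * (1 - variance m / t ^ 2) ≤ (2 * t + 1) * p ⌊mean m + t⌋₊ := by
  set P := (range m).powerset
  have hfar : #{S ∈ P | t ≤ |(weight S : ℝ) - mean m|} ≤ 2 ^ m * variance m / t ^ 2 := by
    rw [le_div_iff₀ (by positivity), ← sum_sq_weight_sub_mean]
    exact card_filter_le_abs_sub_mul_sq_le P _ _ ht.le
  have hsplit : (#{S ∈ P | |(weight S : ℝ) - mean m| < t} : ℝ) +
      #{S ∈ P | t ≤ |(weight S : ℝ) - mean m|} = 2 ^ m := by
    simpa [not_lt, P] using congrArg (Nat.cast (R := ℝ))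
      (card_filter_add_card_filter_not (s := P) fun S => |(weight S : ℝ) - mean m| < t)
  have hnear := card_filter_abs_weight_sub_lt_le P (mean m) ht.le
  calc 2 ^ m * (1 - variance m / t ^ 2) = 2 ^ m - 2 ^ m * variance m / t ^ 2 := by ring
    _ ≤ _ := by linarith

lemma variance_mul_sq_lt {m : ℕ} (hm : 5 ≤ m) {d : ℝ} (hd : 1 < d) :
    variance m * d ^ 2 < (d * (m * √m) / 4 - 1 / 2) ^ 2 := by
  have hm' : (5 : ℝ) ≤ m := by exact_mod_cast hm
  have hs : √(m : ℝ) ^ 2 = m := Real.sq_sqrt (by linarith)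
  have hs2 : 2 ≤ √(m : ℝ) := by nlinarith [Real.sqrt_nonneg (m : ℝ)]
  have hsm : √(m : ℝ) ≤ m / 2 := by nlinarith
  have hu : 0 < m * √(m : ℝ) / 4 - 1 / 2 := by nlinarith
  have hvar : variance m ≤ (m * √(m : ℝ) / 4 - 1 / 2) ^ 2 := by
    rw [variance]
    nlinarith [mul_le_mul_of_nonneg_left hsm (by linarith : (0 : ℝ) ≤ m)]
  calc variance m * d ^ 2 ≤ ((m * √(m : ℝ) / 4 - 1 / 2) * d) ^ 2 := by
        rw [mul_pow]; gcongr
    _ < (d * (m * √m) / 4 - 1 / 2) ^ 2 :=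
        pow_lt_pow_left₀ (by nlinarith) (by positivity) two_ne_zero

end CoinFlip

open CoinFlip

-- `(d² - 1) / d³` is largest at `d = √3`, where it equals `2 / (3√3) < 2 / 5`.
lemma one_sub_one_div_sq_lt {d : ℝ} (hd : 0 < d) : 1 - 1 / d ^ 2 < 2 * d / 5 := by
  rw [one_sub_div (by positivity), div_lt_iff₀ (by positivity)]
  nlinarith [mul_nonneg (sq_nonneg (d - 5 / 3)) hd.le]

lemma two_pow_mul_lt_p_floor_mul_of_le_four {m : ℕ} (hm : 3 ≤ m) (hm4 : m ≤ 4) {d : ℝ}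
    (hd : 0 < d) :
    (2 : ℝ) ^ m * 2 * (1 - 1 / d ^ 2) <
      p ⌊mean m + d * (m * √m) / 4⌋₊ * (d * (m * √m)) := by
  have hm' : (3 : ℝ) ≤ m := by exact_mod_cast hm
  have hN : 2 ≤ ⌊mean m + d * (m * √m) / 4⌋₊ :=
    Nat.le_floor (by rw [mean]; push_cast; nlinarith [show 0 ≤ d * (m * √m) by positivity])
  have hp : (2 : ℝ) ≤ p ⌊mean m + d * (m * √m) / 4⌋₊ := by exact_mod_cast one_lt_p hN
  have hsmall : (2 : ℝ) ^ m * 2 / 5 ≤ m * √m := by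
    interval_cases m
    · nlinarith [Real.sq_sqrt (show (0 : ℝ) ≤ 3 by norm_num), Real.sqrt_nonneg 3]
    · rw [show ((4 : ℕ) : ℝ) = 2 ^ 2 by norm_num, Real.sqrt_sq (by norm_num)]
      norm_num
  calc (2 : ℝ) ^ m * 2 * (1 - 1 / d ^ 2) < 2 ^ m * 2 * (2 * d / 5) := by
        gcongr; exact one_sub_one_div_sq_lt hd
    _ ≤ 2 * (d * (m * √m)) := by nlinarith
    _ ≤ _ := by gcongr

lemma two_pow_mul_lt_p_floor_mul_of_five_le {m : ℕ} (hm : 5 ≤ m) {d : ℝ} (hd : 1 < d) :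
    (2 : ℝ) ^ m * 2 * (1 - 1 / d ^ 2) <
      p ⌊mean m + d * (m * √m) / 4⌋₊ * (d * (m * √m)) := by
  have hvar := variance_mul_sq_lt hm hd
  -- `t` is chosen so that `2 t + 1 = d m^{3/2} / 2`.
  set t := d * (m * √m) / 4 - 1 / 2 with ht_def
  have ht : 0 < t := by
    have : 1 ≤ √(m : ℝ) := Real.one_le_sqrt.2 (by exact_mod_cast (by omega : 1 ≤ m))
    have : 5 ≤ (m : ℝ) * √m := by nlinarith [show (5 : ℝ) ≤ m by exact_mod_cast hm]
    nlinarith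
  have hpN : (p ⌊mean m + t⌋₊ : ℝ) ≤ p ⌊mean m + d * (m * √m) / 4⌋₊ :=
    Nat.cast_le.2 (p_mono (Nat.floor_mono (by linarith)))
  have hVt : variance m / t ^ 2 < 1 / d ^ 2 := by
    rw [div_lt_div_iff₀ (by positivity) (by positivity)]
    linarith
  calc (2 : ℝ) ^ m * 2 * (1 - 1 / d ^ 2) < 2 * (2 ^ m * (1 - variance m / t ^ 2)) := by
        nlinarith [pow_pos (two_pos : (0 : ℝ) < 2) m]
    _ ≤ 2 * ((2 * t + 1) * p ⌊mean m + d * (m * √m) / 4⌋₊) := by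
        refine mul_le_mul_of_nonneg_left ((two_pow_mul_one_sub_variance_div_le m ht).trans ?_)
          two_pos.le
        exact mul_le_mul_of_nonneg_left hpN (by linarith)
    _ = _ := by ring

/-- For `m ≥ 3` and `d > 0`,
`p(⌊m(m+3)/8 + d·m^{3/2}/4⌋) > 2^m · 2(1 - 1/d²)/(d·m^{3/2})`. -/
theorem p_floor_gt (m : ℕ) (hm : 3 ≤ m) (d : ℝ) (hd : 0 < d) :
    (2 : ℝ) ^ m * 2 * (1 - 1 / d ^ 2) / (d * (m : ℝ) ^ ((3 : ℝ) / 2)) <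
      (p ⌊(m : ℝ) * ((m : ℝ) + 3) / 8 + d * (m : ℝ) ^ ((3 : ℝ) / 2) / 4⌋₊ : ℝ) := by
  rw [rpow_three_halves (Nat.cast_nonneg m), div_lt_iff₀ (by positivity)]
  change _ < (p ⌊mean m + d * (m * √m) / 4⌋₊ : ℝ) * _
  rcases le_or_gt m 4 with hm4 | hm5
  · exact two_pow_mul_lt_p_floor_mul_of_le_four hm hm4 hd
  rcases le_or_gt d 1 with hd1 | hd1
  · have hneg : 1 - 1 / d ^ 2 ≤ 0 := by
      rw [sub_nonpos, le_div_iff₀ (by positivity)]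
      nlinarith
    have hpos : (0 : ℝ) < p ⌊mean m + d * (m * √m) / 4⌋₊ * (d * (m * √m)) := by
      have := p_pos ⌊mean m + d * (m * √m) / 4⌋₊
      positivity
    nlinarith [pow_pos (two_pos : (0 : ℝ) < 2) m]
  · exact two_pow_mul_lt_p_floor_mul_of_five_le hm5 hd1
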